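/- For f := (1 - X^2)(1 - Y^2) ∈ ℝ⟨X,Y⟩ and any m ∈ ℕ (m ≥ 1), the element f + 1/m is cyclically equivalent to an element of the quadratic module M_ℝ generated by 1 - X^2 and 1 - Y^2 in ℝ⟨X,Y⟩. -/

import Mathlib

abbrev NCPoly (k : Type) [CommSemiring k] (n : ℕ) := MonoidAlgebra k (FreeMonoid (Fin n))

noncomputable def ncWord (k : Type) [CommSemiring k] {n : ℕ} (w : FreeMonoid (Fin n)) : NCPoly k n :=
  MonoidAlgebra.of k (FreeMonoid (Fin n)) w

noncomputable def ncX (k : Type) [CommSemiring k] {n : ℕ} (i : Fin n) : NCPoly k n :=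
  ncWord k (FreeMonoid.of i)

/-- The involution on `k⟨X⟩` fixing the variables and conjugating coefficients. -/
noncomputable def ncStar {k : Type} [CommSemiring k] [StarRing k] {n : ℕ} (f : NCPoly k n) : NCPoly k n :=
  MonoidAlgebra.ofCoeff (Finsupp.mapDomain FreeMonoid.reverse (Finsupp.mapRange star (star_zero k) f.coeff))

/-- `f` and `g` are cyclically equivalent: `f - g` is a sum of commutators. -/
def IsCyclicEquiv {k : Type} [CommRing k] {n : ℕ} (f g : NCPoly k n) : Prop :=
  f - g ∈ AddSubmonoid.closure {x : NCPoly k n | ∃ p q, x = p * q - q * p}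

/-- The quadratic module generated by the `1 - X_i^2`: all finite sums of
elements `g* g` and `g* (1 - X_i^2) g`. -/
noncomputable def QuadMod (k : Type) [CommRing k] [StarRing k] (n : ℕ) : AddSubmonoid (NCPoly k n) :=
  AddSubmonoid.closure
    ({x | ∃ g : NCPoly k n, x = ncStar g * g} ∪
     {x | ∃ (g : NCPoly k n) (i : Fin n), x = ncStar g * (1 - (ncX k i) ^ 2) * g})

/-- Evaluation of a noncommutative polynomial at a tuple of matrices. -/
noncomputable def ncEval {k : Type} [CommRing k] {n s : ℕ}
    (A : Fin n → Matrix (Fin s) (Fin s) k) :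
    NCPoly k n →ₐ[k] Matrix (Fin s) (Fin s) k :=
  MonoidAlgebra.lift k (Matrix (Fin s) (Fin s) k) (FreeMonoid (Fin n)) (FreeMonoid.lift A)

/-- A self-adjoint contraction matrix: `A* = A` and `1 - A²` positive semidefinite. -/
def IsSAContraction {k : Type} [CommRing k] [StarRing k] [PartialOrder k] [StarOrderedRing k]
    {s : ℕ} (A : Matrix (Fin s) (Fin s) k) : Prop :=
  A.IsHermitian ∧ (1 - A * A).PosSemidef

/-!
With `a = X²` and `c = Y²`, every ring satisfies

  `m (1 - a)(1 - c) + 1 = (1 - c) + aᵐ c + ∑_{k<m} aᵏ (1 - a) + ∑_{j<m} ∑_{k<j} (1 - a) aᵏ (1 - a)(1 - c)`,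

since both sums collapse to geometric sums. Each summand is, up to one cyclic rotation, an element
of the quadratic module: `aᵏ (1 - a) = Xᵏ (1 - X²) Xᵏ`, `aᵐ c ∼ (Y Xᵐ)* (Y Xᵐ)` and
`(1 - a) aᵏ (1 - a)(1 - c) ∼ gₖ* (1 - Y²) gₖ` with `gₖ = (1 - X²) Xᵏ`.
Dividing by `m` gives `f + 1/m`.
-/

open Finset

section Ring

variable {R : Type} [Ring R]

lemma sq_pow_eq_pow_mul_pow (x : R) (k : ℕ) : (x ^ 2) ^ k = x ^ k * x ^ k := by
  rw [← pow_mul, pow_mul', sq]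

lemma sq_pow_mul_one_sub_sq (x : R) (k : ℕ) :
    (x ^ 2) ^ k * (1 - x ^ 2) = x ^ k * (1 - x ^ 2) * x ^ k := by
  have hc : Commute (1 - x ^ 2) (x ^ k) :=
    (Commute.one_left _).sub_left (Commute.pow_pow_self x 2 k)
  rw [mul_assoc, hc.eq, ← mul_assoc, sq_pow_eq_pow_mul_pow]

lemma nsmul_one_sub_mul_one_sub_add_one (a c : R) (m : ℕ) :
    m • ((1 - a) * (1 - c)) + 1 =
      (1 - c) + a ^ m * c + ∑ k ∈ range m, a ^ k * (1 - a) +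
        ∑ j ∈ range m, ∑ k ∈ range j, (1 - a) * a ^ k * (1 - a) * (1 - c) := by
  have inner (j : ℕ) : ∑ k ∈ range j, (1 - a) * a ^ k * (1 - a) * (1 - c) =
      (1 - a ^ j) * ((1 - a) * (1 - c)) := by
    simp only [mul_assoc, ← mul_sum, ← sum_mul, ← mul_neg_geom_sum]
  have single_sum : ∑ k ∈ range m, a ^ k * (1 - a) = 1 - a ^ m := by
    rw [← sum_mul, geom_sum_mul_neg]
  have double_sum : ∑ j ∈ range m, ∑ k ∈ range j, (1 - a) * a ^ k * (1 - a) * (1 - c) =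
      m • ((1 - a) * (1 - c)) - (1 - a ^ m) * (1 - c) := by
    rw [sum_congr rfl fun j _ ↦ inner j, ← sum_mul, sum_sub_distrib, sum_const, card_range,
      sub_mul, smul_mul_assoc, one_mul, ← mul_assoc, geom_sum_mul_neg]
  rw [single_sum, double_sum]
  noncomm_ring

end Ring

section ncStar

variable {k : Type} [CommSemiring k] [StarRing k] {n : ℕ}

@[simp] lemma ncStar_zero : ncStar (0 : NCPoly k n) = 0 := by
  simp [ncStar]

@[simp] lemma ncStar_add (f g : NCPoly k n) : ncStar (f + g) = ncStar f + ncStar g := by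
  simp [ncStar, MonoidAlgebra.coeff_add, Finsupp.mapRange_add, Finsupp.mapDomain_add,
    MonoidAlgebra.ofCoeff_add]

@[simp] lemma ncStar_single (w : FreeMonoid (Fin n)) (c : k) :
    ncStar (MonoidAlgebra.single w c : NCPoly k n) = MonoidAlgebra.single w.reverse (star c) := by
  simp [ncStar, MonoidAlgebra.coeff_single, Finsupp.mapDomain_single]

@[simp] lemma ncStar_smul (c : k) (f : NCPoly k n) : ncStar (c • f) = star c • ncStar f := by
  induction f using MonoidAlgebra.induction_linear with
  | zero => simp
  | add f g hf hg => simp [hf, hg]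
  | single w b => simp

@[simp] lemma ncStar_mul (f g : NCPoly k n) : ncStar (f * g) = ncStar g * ncStar f := by
  induction f using MonoidAlgebra.induction_linear with
  | zero => simp
  | add f f' hf hf' => simp [add_mul, mul_add, hf, hf']
  | single v a =>
    induction g using MonoidAlgebra.induction_linear with
    | zero => simp
    | add g g' hg hg' => simp [add_mul, mul_add, hg, hg']
    | single w b => simp [MonoidAlgebra.single_mul_single, FreeMonoid.reverse_mul, mul_comm]

@[simp] lemma ncStar_one : ncStar (1 : NCPoly k n) = 1 := by
  simp only [MonoidAlgebra.one_def, ncStar_single, star_one]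
  rfl

@[simp] lemma ncStar_ncX (i : Fin n) : ncStar (ncX k i) = ncX k i := by
  simp [ncX, ncWord]

@[simp] lemma ncStar_pow (f : NCPoly k n) (j : ℕ) : ncStar (f ^ j) = ncStar f ^ j := by
  induction j with
  | zero => simp
  | succ j ih => rw [pow_succ, ncStar_mul, ih, pow_succ']

end ncStar

@[simp] lemma ncStar_sub {k : Type} [CommRing k] [StarRing k] {n : ℕ} (f g : NCPoly k n) :
    ncStar (f - g) = ncStar f - ncStar g := by
  rw [eq_sub_iff_add_eq, ← ncStar_add, sub_add_cancel]

namespace IsCyclicEquiv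

variable {k : Type} [CommRing k] {n : ℕ}

lemma refl (f : NCPoly k n) : IsCyclicEquiv f f := by
  simp [IsCyclicEquiv, zero_mem]

lemma trans {f g h : NCPoly k n} (hfg : IsCyclicEquiv f g) (hgh : IsCyclicEquiv g h) :
    IsCyclicEquiv f h := by
  simpa [IsCyclicEquiv] using add_mem hfg hgh

lemma add {f f' g g' : NCPoly k n} (hf : IsCyclicEquiv f g) (hf' : IsCyclicEquiv f' g') :
    IsCyclicEquiv (f + f') (g + g') := by
  rw [IsCyclicEquiv, add_sub_add_comm]
  exact add_mem hf hf'

lemma smul (c : k) {f g : NCPoly k n} (h : IsCyclicEquiv f g) :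
    IsCyclicEquiv (c • f) (c • g) := by
  rw [IsCyclicEquiv] at h ⊢
  rw [← smul_sub]
  generalize f - g = x at h ⊢
  induction h using AddSubmonoid.closure_induction with
  | mem x hx =>
    obtain ⟨p, q, rfl⟩ := hx
    refine AddSubmonoid.subset_closure ⟨c • p, q, ?_⟩
    rw [smul_sub, smul_mul_assoc, mul_smul_comm]
  | zero => simp [zero_mem]
  | add x y _ _ hx hy => simpa [smul_add] using add_mem hx hy

end IsCyclicEquiv

lemma isCyclicEquiv_mul_comm {k : Type} [CommRing k] {n : ℕ} (p q : NCPoly k n) :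
    IsCyclicEquiv (p * q) (q * p) :=
  AddSubmonoid.subset_closure ⟨p, q, rfl⟩

section QuadMod

variable {k : Type} [CommRing k] [StarRing k] {n : ℕ}

lemma ncStar_mul_self_mem_quadMod (g : NCPoly k n) : ncStar g * g ∈ QuadMod k n :=
  AddSubmonoid.subset_closure (Or.inl ⟨g, rfl⟩)

lemma ncStar_mul_one_sub_sq_mul_mem_quadMod (g : NCPoly k n) (i : Fin n) :
    ncStar g * (1 - ncX k i ^ 2) * g ∈ QuadMod k n :=
  AddSubmonoid.subset_closure (Or.inr ⟨g, i, rfl⟩)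

lemma one_sub_ncX_sq_mem_quadMod (i : Fin n) : 1 - ncX k i ^ 2 ∈ QuadMod k n := by
  simpa using ncStar_mul_one_sub_sq_mul_mem_quadMod (1 : NCPoly k n) i

lemma ncX_sq_pow_mul_one_sub_sq_mem_quadMod (i : Fin n) (j : ℕ) :
    (ncX k i ^ 2) ^ j * (1 - ncX k i ^ 2) ∈ QuadMod k n := by
  simpa [sq_pow_mul_one_sub_sq] using ncStar_mul_one_sub_sq_mul_mem_quadMod (ncX k i ^ j) i

lemma QuadMod.smul_mem {c : ℝ} (hc : 0 ≤ c) {f : NCPoly ℝ n} (hf : f ∈ QuadMod ℝ n) :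
    c • f ∈ QuadMod ℝ n := by
  have hc' : √c * √c = c := Real.mul_self_sqrt hc
  induction hf using AddSubmonoid.closure_induction with
  | mem x hx =>
    rcases hx with ⟨g, rfl⟩ | ⟨g, i, rfl⟩
    · simpa [smul_smul, hc'] using ncStar_mul_self_mem_quadMod (√c • g)
    · simpa [smul_smul, hc'] using ncStar_mul_one_sub_sq_mul_mem_quadMod (√c • g) i
  | zero => simp [zero_mem]
  | add x y _ _ hx hy => simpa [smul_add] using add_mem hx hy

end QuadMod

def CyclicQuadMod (k : Type) [CommRing k] [StarRing k] (n : ℕ) : AddSubmonoid (NCPoly k n) where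
  carrier := {f | ∃ h ∈ QuadMod k n, IsCyclicEquiv f h}
  zero_mem' := ⟨0, zero_mem _, .refl 0⟩
  add_mem' := fun ⟨h, hh, hfh⟩ ⟨h', hh', hfh'⟩ ↦
    ⟨h + h', add_mem hh hh', hfh.add hfh'⟩

namespace CyclicQuadMod

variable {k : Type} [CommRing k] [StarRing k] {n : ℕ}

lemma mem_iff {f : NCPoly k n} :
    f ∈ CyclicQuadMod k n ↔ ∃ h ∈ QuadMod k n, IsCyclicEquiv f h :=
  Iff.rfl

lemma quadMod_le : QuadMod k n ≤ CyclicQuadMod k n :=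
  fun f hf ↦ ⟨f, hf, .refl f⟩

lemma mem_of_isCyclicEquiv {f g : NCPoly k n} (hfg : IsCyclicEquiv f g)
    (hg : g ∈ CyclicQuadMod k n) : f ∈ CyclicQuadMod k n :=
  let ⟨h, hh, hgh⟩ := hg
  ⟨h, hh, hfg.trans hgh⟩

lemma mul_mem_of_mul_mem_quadMod {p q : NCPoly k n} (h : q * p ∈ QuadMod k n) :
    p * q ∈ CyclicQuadMod k n :=
  mem_of_isCyclicEquiv (isCyclicEquiv_mul_comm p q) (quadMod_le h)

lemma smul_mem {c : ℝ} (hc : 0 ≤ c) {f : NCPoly ℝ n} (hf : f ∈ CyclicQuadMod ℝ n) :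
    c • f ∈ CyclicQuadMod ℝ n :=
  let ⟨h, hh, hfh⟩ := hf
  ⟨c • h, QuadMod.smul_mem hc hh, hfh.smul c⟩

lemma ncX_sq_pow_mul_ncX_sq_mem (i j : Fin n) (m : ℕ) :
    (ncX k i ^ 2) ^ m * ncX k j ^ 2 ∈ CyclicQuadMod k n := by
  rw [sq_pow_eq_pow_mul_pow, mul_assoc]
  apply mul_mem_of_mul_mem_quadMod
  have h := ncStar_mul_self_mem_quadMod (ncX k j * ncX k i ^ m)
  simp only [ncStar_mul, ncStar_pow, ncStar_ncX] at h
  simpa only [sq, mul_assoc] using h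

lemma one_sub_ncX_sq_mul_sq_pow_mem (i j : Fin n) (m : ℕ) :
    (1 - ncX k i ^ 2) * (ncX k i ^ 2) ^ m * (1 - ncX k i ^ 2) * (1 - ncX k j ^ 2) ∈
      CyclicQuadMod k n := by
  have hpq : (1 - ncX k i ^ 2) * (ncX k i ^ 2) ^ m * (1 - ncX k i ^ 2) * (1 - ncX k j ^ 2) =
      ((1 - ncX k i ^ 2) * ncX k i ^ m) *
        (ncX k i ^ m * (1 - ncX k i ^ 2) * (1 - ncX k j ^ 2)) := by
    simp only [sq_pow_eq_pow_mul_pow, mul_assoc]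
  rw [hpq]
  apply mul_mem_of_mul_mem_quadMod
  have h := ncStar_mul_one_sub_sq_mul_mem_quadMod ((1 - ncX k i ^ 2) * ncX k i ^ m) j
  simp only [ncStar_mul, ncStar_sub, ncStar_one, ncStar_pow, ncStar_ncX] at h
  simpa only [mul_assoc] using h

end CyclicQuadMod

lemma nsmul_one_sub_sq_mul_one_sub_sq_add_one_mem_cyclicQuadMod {k : Type} [CommRing k]
    [StarRing k] {n : ℕ} (i j : Fin n) (m : ℕ) :
    m • ((1 - ncX k i ^ 2) * (1 - ncX k j ^ 2)) + 1 ∈ CyclicQuadMod k n := by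
  rw [nsmul_one_sub_mul_one_sub_add_one]
  refine add_mem (add_mem (add_mem ?_ ?_) (sum_mem fun l _ ↦ ?_))
    (sum_mem fun l _ ↦ sum_mem fun l' _ ↦ ?_)
  · exact CyclicQuadMod.quadMod_le (one_sub_ncX_sq_mem_quadMod j)
  · exact CyclicQuadMod.ncX_sq_pow_mul_ncX_sq_mem i j m
  · exact CyclicQuadMod.quadMod_le (ncX_sq_pow_mul_one_sub_sq_mem_quadMod i l)
  · exact CyclicQuadMod.one_sub_ncX_sq_mul_sq_pow_mem i j l'

theorem stmt16 (m : ℕ) (hm : 1 ≤ m) :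
    ∃ h ∈ QuadMod ℝ 2,
      IsCyclicEquiv
        ((1 - (ncX ℝ 0 : NCPoly ℝ 2) ^ 2) * (1 - ncX ℝ 1 ^ 2) + (m : ℝ)⁻¹ • 1) h := by
  have hm' : (m : ℝ) ≠ 0 := Nat.cast_ne_zero.2 (Nat.one_le_iff_ne_zero.1 hm)
  have hscale : (1 - (ncX ℝ 0 : NCPoly ℝ 2) ^ 2) * (1 - ncX ℝ 1 ^ 2) + (m : ℝ)⁻¹ • 1 =
      (m : ℝ)⁻¹ • (m • ((1 - ncX ℝ 0 ^ 2) * (1 - ncX ℝ 1 ^ 2)) + 1) := by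
    rw [smul_add, ← Nat.cast_smul_eq_nsmul ℝ, smul_smul, inv_mul_cancel₀ hm', one_smul]
  rw [← CyclicQuadMod.mem_iff, hscale]
  exact CyclicQuadMod.smul_mem (inv_nonneg.2 m.cast_nonneg)
    (nsmul_one_sub_sq_mul_one_sub_sq_add_one_mem_cyclicQuadMod 0 1 m)
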